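/- arXiv:2006.05408 — 3 statements merged into one kernel-verified Lean document; each statement's English description precedes it below -/
import Mathlib

section
/- For every positive integer N, the mixing map satisfies Y_{N²}(m_N, m_N) ≤ 4N⁵. Consequently Y_{N²}(m_N, m_N) / (N²)³ → 0 as N → ∞, i.e. the sequence (m_N)_N of permutations of [N²]×[N²] satisfies condition (C). -/
open Filter

/-- `Y_M(σ,τ)`. -/
def Ycnt (M : ℕ) (σ τ : Equiv.Perm (Fin M × Fin M)) : ℕ :=
  (Finset.univ.filter fun x : Fin M × Fin M × Fin M =>
    (σ (x.1, x.2.1)).1 = (τ (x.1, x.2.2)).1 ∨ (σ (x.1, x.2.1)).1 = (τ (x.2.2, x.2.1)).1).card +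
  (Finset.univ.filter fun x : Fin M × Fin M × Fin M =>
    (σ (x.1, x.2.1)).2 = (τ (x.1, x.2.2)).2 ∨ (σ (x.1, x.2.1)).2 = (τ (x.2.2, x.2.1)).2).card

/-- The mixing permutation on pairs of pairs: `((α1,β1),(α2,β2)) ↦ ((α1,α2),(β1,β2))`. -/
def mixSwap (N : ℕ) : Equiv.Perm ((Fin N × Fin N) × (Fin N × Fin N)) where
  toFun x := ((x.1.1, x.2.1), (x.1.2, x.2.2))
  invFun x := ((x.1.1, x.2.1), (x.1.2, x.2.2))
  left_inv _ := rfl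
  right_inv _ := rfl

/-- The mixing map `m_N`, a permutation of `[N²] × [N²]`, via the identification
`Fin N × Fin N ≃ Fin (N*N)`, `(α,β) ↦ α·N + β` (the `0`-based version of `(α-1)N + β`). -/
def mixMap (N : ℕ) : Equiv.Perm (Fin (N * N) × Fin (N * N)) :=
  ((Equiv.prodCongr finProdFinEquiv.symm finProdFinEquiv.symm).trans (mixSwap N)).trans
    (Equiv.prodCongr finProdFinEquiv finProdFinEquiv)

lemma aux_card (N : ℕ) (f g : Fin (N*N) → Fin N)
    (h : ∀ k k' : Fin (N*N), f k = f k' → g k = g k' → k = k')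
    (P : Fin (N*N) × Fin (N*N) × Fin (N*N) → Prop) [DecidablePred P]
    (hP : ∀ x, P x → f x.2.1 = f x.2.2 ∨ f x.1 = f x.2.2) :
    (Finset.univ.filter P).card ≤ 2 * N ^ 5 := by
  have hle : (Finset.univ.filter P).card ≤
      (Finset.univ : Finset (Fin (N*N) × Fin (N*N) × Fin 2 × Fin N)).card := by
    apply Finset.card_le_card_of_injOn
      (fun x => (x.1, x.2.1, if f x.2.1 = f x.2.2 then (0 : Fin 2) else 1, g x.2.2))
    · intro x _; exact Finset.mem_univ _
    · intro x hx y hy hxy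
      simp only [Finset.coe_filter, Set.mem_setOf_eq, Finset.mem_univ, true_and] at hx hy
      simp only [Prod.mk.injEq] at hxy
      obtain ⟨e1, e2, e3, e4⟩ := hxy
      have hk : x.2.2 = y.2.2 := by
        apply h _ _ _ e4
        by_cases hc : f x.2.1 = f x.2.2
        · by_cases hc' : f y.2.1 = f y.2.2
          · rw [← hc, ← hc', e2]
          · simp [hc, hc'] at e3
        · by_cases hc' : f y.2.1 = f y.2.2
          · simp [hc, hc'] at e3
          · have h1 := (hP x hx).resolve_left hc
            have h2 := (hP y hy).resolve_left hc'
            rw [← h1, ← h2, e1]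
      exact Prod.ext e1 (Prod.ext e2 hk)
  refine hle.trans ?_
  have : (Finset.univ : Finset (Fin (N*N) × Fin (N*N) × Fin 2 × Fin N)).card = 2 * N ^ 5 := by
    simp [Finset.card_univ]
    ring
  omega

lemma mix_apply (N : ℕ) (i j : Fin (N*N)) :
    mixMap N (i, j) =
      (finProdFinEquiv ((finProdFinEquiv.symm i).1, (finProdFinEquiv.symm j).1),
       finProdFinEquiv ((finProdFinEquiv.symm i).2, (finProdFinEquiv.symm j).2)) := rfl

lemma mix_bound (N : ℕ) : Ycnt (N * N) (mixMap N) (mixMap N) ≤ 4 * N ^ 5 := by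
  set d : Fin (N*N) → Fin N × Fin N := fun k => finProdFinEquiv.symm k with hd
  have hinj : ∀ k k' : Fin (N*N), (d k).1 = (d k').1 → (d k).2 = (d k').2 → k = k' := by
    intro k k' h1 h2
    have : d k = d k' := Prod.ext h1 h2
    exact finProdFinEquiv.symm.injective this
  have hinj' : ∀ k k' : Fin (N*N), (d k).2 = (d k').2 → (d k).1 = (d k').1 → k = k' := by
    intro k k' h1 h2; exact hinj k k' h2 h1
  have h1 := aux_card N (fun k => (d k).1) (fun k => (d k).2) hinj
    (fun x : Fin (N*N) × Fin (N*N) × Fin (N*N) =>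
      (mixMap N (x.1, x.2.1)).1 = (mixMap N (x.1, x.2.2)).1 ∨
      (mixMap N (x.1, x.2.1)).1 = (mixMap N (x.2.2, x.2.1)).1)
    (by
      intro x hx
      rcases hx with hx | hx
      · left
        rw [mix_apply, mix_apply] at hx
        have := finProdFinEquiv.injective hx
        exact (Prod.mk.injEq _ _ _ _ ▸ this).2
      · right
        rw [mix_apply, mix_apply] at hx
        have := finProdFinEquiv.injective hx
        exact (Prod.mk.injEq _ _ _ _ ▸ this).1)
  have h2 := aux_card N (fun k => (d k).2) (fun k => (d k).1) hinj'
    (fun x : Fin (N*N) × Fin (N*N) × Fin (N*N) =>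
      (mixMap N (x.1, x.2.1)).2 = (mixMap N (x.1, x.2.2)).2 ∨
      (mixMap N (x.1, x.2.1)).2 = (mixMap N (x.2.2, x.2.1)).2)
    (by
      intro x hx
      rcases hx with hx | hx
      · left
        rw [mix_apply, mix_apply] at hx
        have := finProdFinEquiv.injective hx
        exact (Prod.mk.injEq _ _ _ _ ▸ this).2
      · right
        rw [mix_apply, mix_apply] at hx
        have := finProdFinEquiv.injective hx
        exact (Prod.mk.injEq _ _ _ _ ▸ this).1)
  unfold Ycnt
  omega

theorem stmt13 :
    (∀ N : ℕ, 0 < N → Ycnt (N * N) (mixMap N) (mixMap N) ≤ 4 * N ^ 5) ∧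
    Tendsto (fun N : ℕ => (Ycnt (N * N) (mixMap N) (mixMap N) : ℝ) / ((N : ℝ) ^ 2) ^ 3)
      atTop (nhds 0) := by
  refine ⟨fun N _ => mix_bound N, ?_⟩
  apply squeeze_zero' (g := fun N : ℕ => 4 / (N : ℝ))
  · filter_upwards [] with N
    positivity
  · filter_upwards [eventually_ge_atTop 1] with N hN
    have hN0 : (0 : ℝ) < (N : ℝ) := by exact_mod_cast hN
    have hb : (Ycnt (N * N) (mixMap N) (mixMap N) : ℝ) ≤ 4 * (N : ℝ) ^ 5 := by
      exact_mod_cast mix_bound N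
    have hpos : (0 : ℝ) < ((N : ℝ) ^ 2) ^ 3 := by positivity
    rw [div_le_div_iff₀ hpos hN0]
    calc (Ycnt (N * N) (mixMap N) (mixMap N) : ℝ) * (N : ℝ)
        ≤ 4 * (N : ℝ) ^ 5 * (N : ℝ) := by nlinarith
      _ = 4 * ((N : ℝ) ^ 2) ^ 3 := by ring
  · exact tendsto_const_div_atTop_nhds_zero_nat 4
end

section
/- The pair of sequences (m_N)_N and (Γ_{N,N})_N of permutations of [N²]×[N²] satisfies condition (C3): X_{N²}(m_N, Γ_{N,N}) / (N²)² → 0 and Y_{N²}(m_N, Γ_{N,N}) / (N²)³ → 0 as N → ∞. More precisely, X_{N²}(m_N, Γ_{N,N}) ≤ 2N³ and Y_{N²}(m_N, Γ_{N,N}) = o(N⁶). -/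
open Filter

/-- `X_M(σ,τ) = |{(i,j,k) : σ(i,j) ∈ {τ(i,k), τ(k,j)}}|`. -/
def Xcnt (M : ℕ) (σ τ : Equiv.Perm (Fin M × Fin M)) : ℕ :=
  (Finset.univ.filter fun x : Fin M × Fin M × Fin M =>
    σ (x.1, x.2.1) = τ (x.1, x.2.2) ∨ σ (x.1, x.2.1) = τ (x.2.2, x.2.1)).card

/-- Transposition of the inner (block) indices: `((α1,β1),(α2,β2)) ↦ ((α1,β2),(α2,β1))`. -/
def blockSwap (b d : ℕ) : Equiv.Perm ((Fin b × Fin d) × (Fin b × Fin d)) where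
  toFun x := ((x.1.1, x.2.2), (x.2.1, x.1.2))
  invFun x := ((x.1.1, x.2.2), (x.2.1, x.1.2))
  left_inv _ := rfl
  right_inv _ := rfl

/-- The `(b,d)`-partial transpose `Γ_{b,d}`. -/
def ptrans (b d : ℕ) : Equiv.Perm (Fin (b * d) × Fin (b * d)) :=
  ((Equiv.prodCongr finProdFinEquiv.symm finProdFinEquiv.symm).trans (blockSwap b d)).trans
    (Equiv.prodCongr finProdFinEquiv finProdFinEquiv)

section Aux

lemma card_filter_comp_equiv {α β : Type*} [Fintype α] [Fintype β]
    (e : α ≃ β) (p : β → Prop) [DecidablePred p] :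
    (Finset.univ.filter p).card = (Finset.univ.filter fun a => p (e a)).card := by
  refine (Finset.card_bij (fun a _ => e a) ?_ ?_ ?_).symm
  · intro a ha; simpa using (Finset.mem_filter.mp ha).2
  · intro a _ b _ h; exact e.injective h
  · intro b hb
    exact ⟨e.symm b, by simpa using (Finset.mem_filter.mp hb).2, e.apply_symm_apply b⟩

lemma card_filter_eq_equiv {α β : Type*} [Fintype α] [Fintype β] (e : α ≃ β)
    (p : β → Prop) [DecidablePred p] (q : α → Prop) [DecidablePred q]
    (h : ∀ a, p (e a) ↔ q a) :
    (Finset.univ.filter p).card = (Finset.univ.filter q).card := by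
  have h2 : (Finset.univ.filter fun a => p (e a)) = Finset.univ.filter q := by
    ext a; simp [h a]
  rw [card_filter_comp_equiv e p, h2]

lemma card_le_of_inj {α β : Type*} [Fintype β] (s : Finset α) (f : α → β)
    (hf : ∀ a ∈ s, ∀ b ∈ s, f a = f b → a = b) : s.card ≤ Fintype.card β := by
  rw [← Finset.card_univ]
  exact Finset.card_le_card_of_injOn f (fun _ _ => Finset.mem_univ _) hf

lemma mix_apply_s14 (N : ℕ) (a b : Fin N × Fin N) :
    mixMap N (finProdFinEquiv a, finProdFinEquiv b)
      = (finProdFinEquiv (a.1, b.1), finProdFinEquiv (a.2, b.2)) := by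
  simp [mixMap, mixSwap]

lemma ptrans_apply (N : ℕ) (a b : Fin N × Fin N) :
    ptrans N N (finProdFinEquiv a, finProdFinEquiv b)
      = (finProdFinEquiv (a.1, b.2), finProdFinEquiv (b.1, a.2)) := by
  simp [ptrans, blockSwap]

set_option maxHeartbeats 1000000 in
lemma Xcnt_eq (N : ℕ) : Xcnt (N * N) (mixMap N) (ptrans N N) =
    (Finset.univ.filter fun a : (Fin N × Fin N) × (Fin N × Fin N) × (Fin N × Fin N) =>
      (a.2.1.1 = a.2.2.2 ∧ a.1.2 = a.2.2.1 ∧ a.2.1.2 = a.1.2) ∨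
      (a.1.1 = a.2.2.1 ∧ a.2.1.1 = a.2.1.2 ∧ a.1.2 = a.2.1.1 ∧ a.2.1.2 = a.2.2.2)).card := by
  rw [Xcnt]
  refine card_filter_eq_equiv
    (finProdFinEquiv.prodCongr (finProdFinEquiv.prodCongr finProdFinEquiv)) _ _ (fun a => ?_)
  simp only [Equiv.prodCongr_apply, Prod.map, mix_apply_s14, ptrans_apply, Prod.mk.injEq,
    Equiv.apply_eq_iff_eq]
  tauto

set_option maxHeartbeats 1000000 in
lemma Ycnt_eq (N : ℕ) : Ycnt (N * N) (mixMap N) (ptrans N N) =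
    (Finset.univ.filter fun a : (Fin N × Fin N) × (Fin N × Fin N) × (Fin N × Fin N) =>
      a.2.1.1 = a.2.2.2 ∨ (a.1.1 = a.2.2.1 ∧ a.2.1.1 = a.2.1.2)).card +
    (Finset.univ.filter fun a : (Fin N × Fin N) × (Fin N × Fin N) × (Fin N × Fin N) =>
      (a.1.2 = a.2.2.1 ∧ a.2.1.2 = a.1.2) ∨ (a.1.2 = a.2.1.1 ∧ a.2.1.2 = a.2.2.2)).card := by
  rw [Ycnt]
  congr 1
  · refine card_filter_eq_equiv
      (finProdFinEquiv.prodCongr (finProdFinEquiv.prodCongr finProdFinEquiv)) _ _ (fun a => ?_)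
    simp only [Equiv.prodCongr_apply, Prod.map, mix_apply_s14, ptrans_apply, Prod.mk.injEq,
      Equiv.apply_eq_iff_eq]
    try tauto
  · refine card_filter_eq_equiv
      (finProdFinEquiv.prodCongr (finProdFinEquiv.prodCongr finProdFinEquiv)) _ _ (fun a => ?_)
    simp only [Equiv.prodCongr_apply, Prod.map, mix_apply_s14, ptrans_apply, Prod.mk.injEq,
      Equiv.apply_eq_iff_eq]
    try tauto

set_option maxHeartbeats 1000000 in
lemma Xbound (N : ℕ) (hN : 0 < N) :
    Xcnt (N * N) (mixMap N) (ptrans N N) ≤ 2 * N ^ 3 := by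
  rw [Xcnt_eq, Finset.filter_or]
  refine le_trans (Finset.card_union_le _ _) ?_
  have c1 : (Finset.univ.filter fun a : (Fin N × Fin N) × (Fin N × Fin N) × (Fin N × Fin N) =>
      a.2.1.1 = a.2.2.2 ∧ a.1.2 = a.2.2.1 ∧ a.2.1.2 = a.1.2).card ≤ N ^ 3 := by
    refine le_trans (card_le_of_inj (β := (Fin N × Fin N) × Fin N) _
      (fun a => (a.1, a.2.1.1)) ?_) ?_
    · intro a ha b hb h
      simp only [Finset.mem_filter] at ha hb
      simp only [Prod.mk.injEq, Prod.ext_iff] at *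
      aesop
    · simp only [Fintype.card_prod, Fintype.card_fin]
      exact le_of_eq (by ring)
  have c2 : (Finset.univ.filter fun a : (Fin N × Fin N) × (Fin N × Fin N) × (Fin N × Fin N) =>
      a.1.1 = a.2.2.1 ∧ a.2.1.1 = a.2.1.2 ∧ a.1.2 = a.2.1.1 ∧ a.2.1.2 = a.2.2.2).card
      ≤ N ^ 2 := by
    refine le_trans (card_le_of_inj (β := Fin N × Fin N) _ (fun a => a.1) ?_) ?_
    · intro a ha b hb h
      simp only [Finset.mem_filter] at ha hb
      simp only [Prod.mk.injEq, Prod.ext_iff] at *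
      aesop
    · simp only [Fintype.card_prod, Fintype.card_fin]
      exact le_of_eq (by ring)
  have hp : N ^ 2 ≤ N ^ 3 := Nat.pow_le_pow_right hN (by norm_num)
  omega

set_option maxHeartbeats 1000000 in
lemma Ybound (N : ℕ) (hN : 0 < N) :
    Ycnt (N * N) (mixMap N) (ptrans N N) ≤ 4 * N ^ 5 := by
  rw [Ycnt_eq, Finset.filter_or, Finset.filter_or]
  refine le_trans (Nat.add_le_add (Finset.card_union_le _ _) (Finset.card_union_le _ _)) ?_
  have c1 : (Finset.univ.filter fun a : (Fin N × Fin N) × (Fin N × Fin N) × (Fin N × Fin N) =>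
      a.2.1.1 = a.2.2.2).card ≤ N ^ 5 := by
    refine le_trans (card_le_of_inj (β := (Fin N × Fin N) × (Fin N × Fin N) × Fin N) _
      (fun a => (a.1, a.2.1, a.2.2.1)) ?_) ?_
    · intro a ha b hb h
      simp only [Finset.mem_filter] at ha hb
      simp only [Prod.mk.injEq, Prod.ext_iff] at *
      aesop
    · simp only [Fintype.card_prod, Fintype.card_fin]
      exact le_of_eq (by ring)
  have c2 : (Finset.univ.filter fun a : (Fin N × Fin N) × (Fin N × Fin N) × (Fin N × Fin N) =>
      a.1.1 = a.2.2.1 ∧ a.2.1.1 = a.2.1.2).card ≤ N ^ 4 := by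
    refine le_trans (card_le_of_inj (β := (Fin N × Fin N) × Fin N × Fin N) _
      (fun a => (a.1, a.2.1.2, a.2.2.2)) ?_) ?_
    · intro a ha b hb h
      simp only [Finset.mem_filter] at ha hb
      simp only [Prod.mk.injEq, Prod.ext_iff] at *
      aesop
    · simp only [Fintype.card_prod, Fintype.card_fin]
      exact le_of_eq (by ring)
  have c3 : (Finset.univ.filter fun a : (Fin N × Fin N) × (Fin N × Fin N) × (Fin N × Fin N) =>
      a.1.2 = a.2.2.1 ∧ a.2.1.2 = a.1.2).card ≤ N ^ 4 := by
    refine le_trans (card_le_of_inj (β := (Fin N × Fin N) × Fin N × Fin N) _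
      (fun a => (a.1, a.2.1.1, a.2.2.2)) ?_) ?_
    · intro a ha b hb h
      simp only [Finset.mem_filter] at ha hb
      simp only [Prod.mk.injEq, Prod.ext_iff] at *
      aesop
    · simp only [Fintype.card_prod, Fintype.card_fin]
      exact le_of_eq (by ring)
  have c4 : (Finset.univ.filter fun a : (Fin N × Fin N) × (Fin N × Fin N) × (Fin N × Fin N) =>
      a.1.2 = a.2.1.1 ∧ a.2.1.2 = a.2.2.2).card ≤ N ^ 4 := by
    refine le_trans (card_le_of_inj (β := (Fin N × Fin N) × Fin N × Fin N) _
      (fun a => (a.1, a.2.1.2, a.2.2.1)) ?_) ?_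
    · intro a ha b hb h
      simp only [Finset.mem_filter] at ha hb
      simp only [Prod.mk.injEq, Prod.ext_iff] at *
      aesop
    · simp only [Fintype.card_prod, Fintype.card_fin]
      exact le_of_eq (by ring)
  have hp : N ^ 4 ≤ N ^ 5 := Nat.pow_le_pow_right hN (by norm_num)
  refine le_trans (Nat.add_le_add (Nat.add_le_add c1 c2) (Nat.add_le_add c3 c4)) ?_
  omega

end Aux

/-- The pair of sequences `(m_N)` and `(Γ_{N,N})` satisfies condition (C3); more precisely
`X_{N²}(m_N, Γ_{N,N}) ≤ 2N³` and `Y_{N²}(m_N, Γ_{N,N}) = o(N⁶)`. -/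
theorem stmt14 :
    (∀ N : ℕ, 0 < N → Xcnt (N * N) (mixMap N) (ptrans N N) ≤ 2 * N ^ 3) ∧
    Tendsto (fun N : ℕ => (Xcnt (N * N) (mixMap N) (ptrans N N) : ℝ) / ((N : ℝ) ^ 2) ^ 2)
      atTop (nhds 0) ∧
    Tendsto (fun N : ℕ => (Ycnt (N * N) (mixMap N) (ptrans N N) : ℝ) / ((N : ℝ) ^ 2) ^ 3)
      atTop (nhds 0) := by
  refine ⟨fun N hN => Xbound N hN, ?_, ?_⟩
  · refine tendsto_of_tendsto_of_tendsto_of_le_of_le'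
      (tendsto_const_nhds) (tendsto_const_div_atTop_nhds_zero_nat 2) ?_ ?_
    · filter_upwards [eventually_ge_atTop 1] with N hN
      positivity
    · filter_upwards [eventually_ge_atTop 1] with N hN
      have hN0 : (0 : ℝ) < (N : ℝ) := by exact_mod_cast hN
      have hX : (Xcnt (N * N) (mixMap N) (ptrans N N) : ℝ) ≤ 2 * (N : ℝ) ^ 3 := by
        exact_mod_cast Nat.cast_le.mpr (Xbound N hN)
      rw [div_le_div_iff₀ (by positivity) hN0]
      nlinarith [hX, hN0]
  · refine tendsto_of_tendsto_of_tendsto_of_le_of_le'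
      (tendsto_const_nhds) (tendsto_const_div_atTop_nhds_zero_nat 4) ?_ ?_
    · filter_upwards [eventually_ge_atTop 1] with N hN
      positivity
    · filter_upwards [eventually_ge_atTop 1] with N hN
      have hN0 : (0 : ℝ) < (N : ℝ) := by exact_mod_cast hN
      have hY : (Ycnt (N * N) (mixMap N) (ptrans N N) : ℝ) ≤ 4 * (N : ℝ) ^ 5 := by
        exact_mod_cast Nat.cast_le.mpr (Ybound N hN)
      rw [div_le_div_iff₀ (by positivity) hN0]
      nlinarith [hY, hN0]
end

section
/- Let b be a fixed positive integer. For every positive integer d one has X_{bd}(Γ_{b,d}, id) ≤ 2b²d, where id is the identity permutation of [bd]×[bd]. Consequently X_{bN}(Γ_{b,N}, id)/(bN)² → 0 as N → ∞, i.e. the sequence (Γ_{b,N})_N satisfies condition (C2). -/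
/-!
A triple `(i, j, k)` counted by `X_M(σ, id)` has `σ(i, j) = (i, k)` or `σ(i, j) = (k, j)`; in either
case `k` is determined by `(i, j)`, and `σ(i, j)` keeps the first, resp. second, coordinate of
`(i, j)`. For `σ = Γ_{b,d}` both conditions say that `i` and `j` have the same inner index `β`,
which holds for only `b²d` of the pairs `(i, j)`.
-/

open Filter Topology

lemma Xcnt_refl_le {M : ℕ} (σ : Equiv.Perm (Fin M × Fin M)) :
    Xcnt M σ (Equiv.refl _) ≤
      (Finset.univ.filter fun p => (σ p).1 = p.1).card +
        (Finset.univ.filter fun p => (σ p).2 = p.2).card := by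
  rw [Xcnt, Finset.filter_or]
  refine (Finset.card_union_le _ _).trans (add_le_add ?_ ?_)
  · refine (Finset.card_le_card fun x hx => ?_).trans
      (Finset.card_image_le (f := fun p => (p.1, p.2, (σ p).2)))
    have hx := (Finset.mem_filter.1 hx).2
    exact Finset.mem_image.2
      ⟨(x.1, x.2.1), Finset.mem_filter.2 ⟨Finset.mem_univ _, by rw [hx]; rfl⟩, by rw [hx]; rfl⟩
  · refine (Finset.card_le_card fun x hx => ?_).trans
      (Finset.card_image_le (f := fun p => (p.1, p.2, (σ p).1)))
    have hx := (Finset.mem_filter.1 hx).2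
    exact Finset.mem_image.2
      ⟨(x.1, x.2.1), Finset.mem_filter.2 ⟨Finset.mem_univ _, by rw [hx]; rfl⟩, by rw [hx]; rfl⟩

section ptrans

variable {b d : ℕ}

lemma ptrans_apply_s15 (i j : Fin (b * d)) :
    ptrans b d (i, j) =
      (finProdFinEquiv ((finProdFinEquiv.symm i).1, (finProdFinEquiv.symm j).2),
        finProdFinEquiv ((finProdFinEquiv.symm j).1, (finProdFinEquiv.symm i).2)) :=
  rfl

lemma ptrans_fst_eq_iff (p : Fin (b * d) × Fin (b * d)) :
    (ptrans b d p).1 = p.1 ↔ (finProdFinEquiv.symm p.2).2 = (finProdFinEquiv.symm p.1).2 := by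
  rw [ptrans_apply_s15, ← Equiv.eq_symm_apply, Prod.ext_iff]
  simp

lemma ptrans_snd_eq_iff (p : Fin (b * d) × Fin (b * d)) :
    (ptrans b d p).2 = p.2 ↔ (finProdFinEquiv.symm p.2).2 = (finProdFinEquiv.symm p.1).2 := by
  rw [ptrans_apply_s15, ← Equiv.eq_symm_apply, Prod.ext_iff]
  simp [eq_comm]

lemma card_filter_inner_index_eq_le :
    (Finset.univ.filter fun p : Fin (b * d) × Fin (b * d) =>
        (finProdFinEquiv.symm p.2).2 = (finProdFinEquiv.symm p.1).2).card ≤ b ^ 2 * d := by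
  have hcard : Fintype.card (Fin (b * d) × Fin b) = b ^ 2 * d := by
    simp only [Fintype.card_prod, Fintype.card_fin]; ring
  rw [← hcard, ← Finset.card_univ]
  refine Finset.card_le_card_of_injOn (fun p => (p.1, (finProdFinEquiv.symm p.2).1))
    (fun _ _ => Finset.mem_coe.2 (Finset.mem_univ _)) fun p hp q hq hpq => ?_
  simp only [Finset.coe_filter, Finset.mem_univ, true_and, Set.mem_ofPred_eq] at hp hq
  obtain ⟨h1, h2⟩ := Prod.ext_iff.1 hpq
  refine Prod.ext h1 (finProdFinEquiv.symm.injective (Prod.ext h2 ?_))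
  rw [hp, hq, h1]

end ptrans

lemma Xcnt_ptrans_le (b d : ℕ) :
    Xcnt (b * d) (ptrans b d) (Equiv.refl _) ≤ 2 * b ^ 2 * d := by
  refine (Xcnt_refl_le _).trans ?_
  simp only [ptrans_fst_eq_iff, ptrans_snd_eq_iff]
  linarith [card_filter_inner_index_eq_le (b := b) (d := d)]

lemma tendsto_div_mul_sq_of_le {f : ℕ → ℕ} {b C : ℕ} (hb : 0 < b)
    (hf : ∀ N, f N ≤ C * b ^ 2 * N) :
    Tendsto (fun N : ℕ => (f N : ℝ) / ((b : ℝ) * N) ^ 2) atTop (𝓝 0) := by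
  refine squeeze_zero' (g := fun N : ℕ => (C : ℝ) / N) (Eventually.of_forall fun N => by positivity)
    ?_ (tendsto_const_div_atTop_nhds_zero_nat (C : ℝ))
  filter_upwards [eventually_gt_atTop 0] with N hN
  have hN : (0 : ℝ) < N := by exact_mod_cast hN
  have hb : (0 : ℝ) < b := by exact_mod_cast hb
  have hfN : (f N : ℝ) ≤ C * b ^ 2 * N := by exact_mod_cast hf N
  rw [div_le_div_iff₀ (by positivity) hN]
  nlinarith

/-- For fixed `b`, `X_{bd}(Γ_{b,d}, id) ≤ 2b²d`, so `(Γ_{b,N})_N` satisfies condition (C2). -/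
theorem stmt15 (b : ℕ) (hb : 0 < b) :
    (∀ d : ℕ, 0 < d →
      Xcnt (b * d) (ptrans b d) (Equiv.refl (Fin (b * d) × Fin (b * d))) ≤ 2 * b ^ 2 * d) ∧
    Tendsto (fun N : ℕ =>
        (Xcnt (b * N) (ptrans b N) (Equiv.refl (Fin (b * N) × Fin (b * N))) : ℝ) /
          ((b : ℝ) * (N : ℝ)) ^ 2) atTop (nhds 0) :=
  ⟨fun d _ => Xcnt_ptrans_le b d, tendsto_div_mul_sq_of_le hb (Xcnt_ptrans_le b)⟩
end
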